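/- For any prime p ≥ 5, sum_{k=0}^{(p-1)/2} C(2k,k)^2/(16^k*(k+1)) * H_k ≡ 4*(1 - (-1)^{(p-1)/2}) (mod p), where H_k is the k-th harmonic number. -/

import Mathlib

/-!
Write `c k` for the central binomial coefficient and `m = (p - 1) / 2`. Summation by parts
against `H` gives, over `ℚ`,
  `∑_{k ≤ m} c k ^ 2 / (16 ^ k (k + 1)) H k`
  `  = 4 (m + 1) c (m + 1) ^ 2 / 16 ^ (m + 1) H m + 4 (1 - ∑_{k ≤ m} c k ^ 2 / 16 ^ k)`.
Every term is `p`-integral, so both sides can be reduced mod `p`. The first term vanishes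
because `p ∣ c (m + 1) = C(p + 1, m + 1)`. Since `m ≡ -1/2`, we get `c k ≡ (-4) ^ k C(m, k)`,
so the remaining sum is `∑ C(m, k) ^ 2 = C(2m, m) = C(p - 1, m) ≡ (-1) ^ m`.
-/

/-- The `n`-th harmonic number `H_n = ∑_{j=1}^n 1/j`. -/
def H (n : ℕ) : ℚ := ∑ j ∈ Finset.range n, 1 / (j + 1 : ℚ)

open Finset Nat

namespace Rat

variable (α : Type*) [DivisionRing α]

def denNeZeroSubring : Subring ℚ where
  carrier := {q | (q.den : α) ≠ 0}
  mul_mem' {q r} hq hr h := mul_ne_zero hq hr <| by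
    exact_mod_cast zero_dvd_iff.mp (h ▸ Nat.cast_dvd_cast (mul_den_dvd q r))
  one_mem' := by simp
  add_mem' {q r} hq hr h := mul_ne_zero hq hr <| by
    exact_mod_cast zero_dvd_iff.mp (h ▸ Nat.cast_dvd_cast (add_den_dvd q r))
  zero_mem' := by simp
  neg_mem' {q} hq := by simpa [den_neg_eq_den] using hq

variable {α}

lemma mem_denNeZeroSubring {q : ℚ} : q ∈ denNeZeroSubring α ↔ (q.den : α) ≠ 0 := Iff.rfl

lemma inv_natCast_mem_denNeZeroSubring {n : ℕ} (hn : (n : α) ≠ 0) :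
    (n : ℚ)⁻¹ ∈ denNeZeroSubring α := by
  rw [mem_denNeZeroSubring, inv_natCast_den]
  split_ifs <;> simp_all

lemma cast_add_of_mem {q r : ℚ} (hq : q ∈ denNeZeroSubring α) (hr : r ∈ denNeZeroSubring α) :
    ((q + r : ℚ) : α) = q + r :=
  cast_add_of_ne_zero hq hr

lemma cast_sub_of_mem {q r : ℚ} (hq : q ∈ denNeZeroSubring α) (hr : r ∈ denNeZeroSubring α) :
    ((q - r : ℚ) : α) = q - r :=
  cast_sub_of_ne_zero hq hr

lemma cast_mul_of_mem {q r : ℚ} (hq : q ∈ denNeZeroSubring α) (hr : r ∈ denNeZeroSubring α) :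
    ((q * r : ℚ) : α) = q * r :=
  cast_mul_of_ne_zero hq hr

lemma cast_sum_of_mem {ι : Type*} (s : Finset ι) {f : ι → ℚ}
    (hf : ∀ i ∈ s, f i ∈ denNeZeroSubring α) : ((∑ i ∈ s, f i : ℚ) : α) = ∑ i ∈ s, (f i : α) := by
  induction s using Finset.cons_induction with
  | empty => simp
  | cons i s hi ih =>
    rw [sum_cons, sum_cons, cast_add_of_mem (hf i (mem_cons_self i s))
      (Subring.sum_mem _ fun j hj => hf j (mem_cons_of_mem hj)),
      ih fun j hj => hf j (mem_cons_of_mem hj)]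

end Rat

lemma H_succ (n : ℕ) : H (n + 1) = H n + 1 / (n + 1) := by
  simp [H, sum_range_succ]

/-- With `g n = 4 (n + 1) c (n + 1) ^ 2 / 16 ^ (n + 1)` one has
`g n - g (n - 1) = c n ^ 2 / (16 ^ n (n + 1))`, because `(2n + 1) ^ 2 - 4n (n + 1) = 1`;
this is summation by parts against `H`. -/
lemma sum_centralBinom_sq_div_mul_H (n : ℕ) :
    ∑ k ∈ range (n + 1), (centralBinom k : ℚ) ^ 2 / (16 ^ k * (k + 1)) * H k =
      4 * (n + 1) * (centralBinom (n + 1) : ℚ) ^ 2 / 16 ^ (n + 1) * H n +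
        4 * (1 - ∑ k ∈ range (n + 1), (centralBinom k : ℚ) ^ 2 / 16 ^ k) := by
  induction n with
  | zero => simp [H]
  | succ n ih =>
    have hrec : (centralBinom (n + 2) : ℚ) = 2 * (2 * n + 3) * centralBinom (n + 1) / (n + 2) := by
      rw [eq_div_iff (by positivity), mul_comm]
      exact_mod_cast succ_mul_centralBinom_succ (n + 1)
    rw [sum_range_succ, ih, sum_range_succ _ (n + 1), H_succ, hrec]
    push_cast
    field_simp
    ring

lemma ZMod.natCast_ne_zero_of_pos_of_lt {p j : ℕ} (h0 : 0 < j) (hj : j < p) : (j : ZMod p) ≠ 0 := by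
  rw [Ne, ZMod.natCast_eq_zero_iff]
  exact Nat.not_dvd_of_pos_of_lt h0 hj

section Reduction

variable {p : ℕ} [hp : Fact p.Prime]

lemma choose_pred_eq_neg_one_pow {k : ℕ} (hk : k < p) : ((p - 1).choose k : ZMod p) = (-1) ^ k := by
  induction k with
  | zero => simp
  | succ k ih =>
    have hpk : (p.choose (k + 1) : ZMod p) = 0 :=
      (ZMod.natCast_eq_zero_iff _ _).mpr (hp.out.dvd_choose_self k.succ_ne_zero hk)
    have hpascal := Nat.choose_succ_succ' (p - 1) k
    rw [Nat.sub_add_cancel hp.out.one_le] at hpascal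
    rw [hpascal, Nat.cast_add, ih (by omega)] at hpk
    linear_combination hpk

/-- `c k = (-4) ^ k C(-1/2, k)`, and `m ≡ -1/2` mod `p`. -/
lemma centralBinom_eq_neg_four_pow_mul_choose {m k : ℕ} (hpm : p = 2 * m + 1) (hk : k ≤ m) :
    (centralBinom k : ZMod p) = (-4) ^ k * m.choose k := by
  induction k with
  | zero => simp
  | succ k ih =>
    have hcentral :
        ((k : ZMod p) + 1) * centralBinom (k + 1) = 2 * (2 * k + 1) * centralBinom k := by
      simpa using congrArg (Nat.cast (R := ZMod p)) (succ_mul_centralBinom_succ k)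
    have hchoose : (m.choose (k + 1) : ZMod p) * (k + 1) = m.choose k * (m - k) := by
      simpa [Nat.cast_sub (by omega : k ≤ m)] using
        congrArg (Nat.cast (R := ZMod p)) (choose_succ_right_eq m k)
    have hp0 : (2 * m + 1 : ZMod p) = 0 := by
      simpa using (ZMod.natCast_eq_zero_iff (2 * m + 1) p).mpr ⟨1, by omega⟩
    have hk0 : (k + 1 : ZMod p) ≠ 0 := by
      exact_mod_cast ZMod.natCast_ne_zero_of_pos_of_lt k.succ_pos (by omega)
    refine mul_left_cancel₀ hk0 ?_
    linear_combination hcentral + 2 * (2 * k + 1) * ih (by omega) - (-4) ^ (k + 1) * hchoose +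
      2 * (-4) ^ k * (m.choose k : ZMod p) * hp0

lemma H_mem_denNeZeroSubring {n : ℕ} (hn : n < p) : H n ∈ Rat.denNeZeroSubring (ZMod p) := by
  refine Subring.sum_mem _ fun j hj => ?_
  rw [one_div, ← Nat.cast_succ]
  exact Rat.inv_natCast_mem_denNeZeroSubring
    (ZMod.natCast_ne_zero_of_pos_of_lt j.succ_pos (by simp at hj; omega))

lemma ZMod.sixteen_ne_zero (hp2 : p ≠ 2) : (16 : ZMod p) ≠ 0 := by
  have h2 : (2 : ZMod p) ≠ 0 := Ring.two_ne_zero (by rwa [ZMod.ringChar_zmod_n])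
  simpa [show (16 : ZMod p) = 2 ^ 4 by norm_num] using h2

lemma inv_sixteen_mem_denNeZeroSubring (hp2 : p ≠ 2) :
    (16 : ℚ)⁻¹ ∈ Rat.denNeZeroSubring (ZMod p) :=
  Rat.inv_natCast_mem_denNeZeroSubring (n := 16) (by simpa using ZMod.sixteen_ne_zero hp2)

lemma centralBinom_sq_div_sixteen_pow_mem (hp2 : p ≠ 2) (k : ℕ) :
    (centralBinom k : ℚ) ^ 2 / 16 ^ k ∈ Rat.denNeZeroSubring (ZMod p) := by
  rw [div_eq_mul_inv, ← inv_pow]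
  exact mul_mem (pow_mem (natCast_mem _ _) 2) (pow_mem (inv_sixteen_mem_denNeZeroSubring hp2) k)

lemma cast_sum_centralBinom_sq_div_sixteen_pow {m : ℕ} (hpm : p = 2 * m + 1) :
    ((∑ k ∈ range (m + 1), (centralBinom k : ℚ) ^ 2 / 16 ^ k : ℚ) : ZMod p) = (-1) ^ m := by
  rw [Rat.cast_sum_of_mem _ fun k _ => centralBinom_sq_div_sixteen_pow_mem (by omega) k]
  have h16 : (16 : ZMod p) ≠ 0 := ZMod.sixteen_ne_zero (by omega)
  have neg_four_pow_sq (k : ℕ) : ((-4 : ZMod p) ^ k) ^ 2 = 16 ^ k := by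
    rw [← pow_mul, mul_comm, pow_mul]
    norm_num
  calc ∑ k ∈ range (m + 1), (((centralBinom k : ℚ) ^ 2 / 16 ^ k : ℚ) : ZMod p)
      = ∑ k ∈ range (m + 1), (m.choose k : ZMod p) ^ 2 := by
        refine sum_congr rfl fun k hk => ?_
        rw [Rat.cast_div_of_ne_zero (by simp) (by simpa using pow_ne_zero k h16),
          Rat.cast_pow, Rat.cast_pow, Rat.cast_natCast, Rat.cast_ofNat,
          centralBinom_eq_neg_four_pow_mul_choose hpm (by simp at hk; omega),
          mul_pow, neg_four_pow_sq, mul_div_cancel_left₀ _ (pow_ne_zero _ h16)]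
    _ = ((p - 1).choose m : ZMod p) := by
        rw [show p - 1 = 2 * m by omega, ← sum_range_choose_sq]
        push_cast
        rfl
    _ = (-1) ^ m := choose_pred_eq_neg_one_pow (by omega)

lemma cast_sum_centralBinom_sq_div_mul_H {m : ℕ} (hpm : p = 2 * m + 1) :
    ((∑ k ∈ range (m + 1), (centralBinom k : ℚ) ^ 2 / (16 ^ k * (k + 1)) * H k : ℚ) : ZMod p) =
      4 * (1 - (-1) ^ m) := by
  have hH : H m ∈ Rat.denNeZeroSubring (ZMod p) := H_mem_denNeZeroSubring (by omega)
  have h16 := inv_sixteen_mem_denNeZeroSubring (p := p) (by omega)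
  have hT : ∑ k ∈ range (m + 1), (centralBinom k : ℚ) ^ 2 / 16 ^ k ∈
      Rat.denNeZeroSubring (ZMod p) :=
    Subring.sum_mem _ fun k _ => centralBinom_sq_div_sixteen_pow_mem (by omega) k
  have hY : 4 * (m + 1) / 16 ^ (m + 1) * H m ∈ Rat.denNeZeroSubring (ZMod p) := by
    rw [div_eq_mul_inv, ← inv_pow]
    exact mul_mem (mul_mem (mul_mem (ofNat_mem _ 4) (add_mem (natCast_mem _ m) (one_mem _)))
      (pow_mem h16 _)) hH
  have hc : (centralBinom (m + 1) : ZMod p) = 0 := by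
    rw [centralBinom_eq_two_mul_choose, ZMod.natCast_eq_zero_iff]
    refine hp.out.dvd_choose ?_ ?_ ?_
    all_goals have := hp.out.two_le; omega
  rw [sum_centralBinom_sq_div_mul_H,
    show 4 * (m + 1) * (centralBinom (m + 1) : ℚ) ^ 2 / 16 ^ (m + 1) * H m =
      (centralBinom (m + 1) ^ 2 : ℕ) * (4 * (m + 1) / 16 ^ (m + 1) * H m) by push_cast; ring,
    Rat.cast_add_of_mem (mul_mem (natCast_mem _ _) hY)
      (mul_mem (ofNat_mem _ 4) (sub_mem (one_mem _) hT)),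
    Rat.cast_mul_of_mem (natCast_mem _ _) hY,
    Rat.cast_mul_of_mem (ofNat_mem _ 4) (sub_mem (one_mem _) hT),
    Rat.cast_sub_of_mem (one_mem _) hT, cast_sum_centralBinom_sq_div_sixteen_pow hpm]
  simp [hc]

end Reduction

theorem stmt6_general (p : ℕ) [hp : Fact p.Prime] :
    (((∑ k ∈ Finset.range ((p - 1) / 2 + 1),
        (((2 * k).choose k : ℚ)) ^ 2 / (16 ^ k * (k + 1 : ℚ)) * H k) : ℚ) : ZMod p) =
      ((4 * (1 - (-1 : ℚ) ^ ((p - 1) / 2)) : ℚ) : ZMod p) := by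
  rcases hp.out.eq_two_or_odd' with rfl | ⟨m, rfl⟩
  · simp [H]
  rw [show (2 * m + 1 - 1) / 2 = m by omega,
    show (4 * (1 - (-1 : ℚ) ^ m)) = ((4 * (1 - (-1) ^ m) : ℤ) : ℚ) by push_cast; rfl,
    Rat.cast_intCast]
  simp only [← centralBinom_eq_two_mul_choose]
  rw [cast_sum_centralBinom_sq_div_mul_H rfl]
  push_cast
  rfl

theorem stmt6 (p : ℕ) [hp : Fact p.Prime] (hp5 : 5 ≤ p) :
    (((∑ k ∈ Finset.range ((p - 1) / 2 + 1),
        (((2 * k).choose k : ℚ)) ^ 2 / (16 ^ k * (k + 1 : ℚ)) * H k) : ℚ) : ZMod p) =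
      ((4 * (1 - (-1 : ℚ) ^ ((p - 1) / 2)) : ℚ) : ZMod p) :=
  stmt6_general p (hp := hp)
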